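/- arXiv:2109.01310 — 3 statements merged into one kernel-verified Lean document; each statement's English description precedes it below -/
import Mathlib

section
/- Let G be a δ-degenerate graph on n vertices. Then there is a partition S_1, …, S_k of V(G) with k ≤ δ·log₂ n (for n ≥ 2) such that each S_i is a stable (independent) set, and for every i and every v ∈ S_i, the degree of v in G[V(G) \ (S_1 ∪ ⋯ ∪ S_{i−1})] is at most 4δ. -/
universe u v

variable {V : Type u}

/-- The open neighborhood of a set `D`: vertices outside `D` with a neighbor in `D`. -/
def nbhd (G : SimpleGraph V) (D : Set V) : Set V :=
  {w | w ∉ D ∧ ∃ u ∈ D, G.Adj u w}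

/-- `u` and `w` are joined by a walk all of whose vertices lie in `S`. -/
def ConnectedIn (G : SimpleGraph V) (S : Set V) (u w : V) : Prop :=
  ∃ p : G.Walk u w, ∀ x ∈ p.support, x ∈ S

/-- `D` is a connected component of the subgraph of `G` induced on `S`. -/
def IsCompOf (G : SimpleGraph V) (S : Set V) (D : Set V) : Prop :=
  D.Nonempty ∧ D ⊆ S ∧ (∀ u ∈ D, ∀ w ∈ D, ConnectedIn G D u w) ∧
    ∀ u ∈ D, ∀ w ∈ S, G.Adj u w → w ∈ D

/-- `X` is a minimal separator: some `u, w` outside `X` are separated by `X`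
but by no proper subset of `X`. -/
def IsMinimalSeparator (G : SimpleGraph V) (X : Set V) : Prop :=
  ∃ u w : V, u ∉ X ∧ w ∉ X ∧ ¬ ConnectedIn G Xᶜ u w ∧
    ∀ Y : Set V, Y ⊂ X → ConnectedIn G Yᶜ u w

/-- A tree decomposition of the subgraph of `G` induced on `W`. -/
structure IsTreeDecompOn {T : Type v} (G : SimpleGraph V) (W : Set V)
    (tree : SimpleGraph T) (χ : T → Set V) : Prop where
  isTree : tree.IsTree
  bags_subset : ∀ t, χ t ⊆ W
  mem_bag : ∀ x ∈ W, ∃ t, x ∈ χ t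
  edge_bag : ∀ x ∈ W, ∀ y ∈ W, G.Adj x y → ∃ t, x ∈ χ t ∧ y ∈ χ t
  trace_connected : ∀ x : V, ∀ t₁, x ∈ χ t₁ → ∀ t₂, x ∈ χ t₂ →
    ConnectedIn tree {t | x ∈ χ t} t₁ t₂

/-- A tree decomposition of `G`. -/
def IsTreeDecomp {T : Type v} (G : SimpleGraph V)
    (tree : SimpleGraph T) (χ : T → Set V) : Prop :=
  IsTreeDecompOn G Set.univ tree χ

/-- The treewidth of `G`: the least `w` such that `G` has a tree decomposition
all of whose bags have at most `w + 1` vertices. -/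
noncomputable def treewidth (G : SimpleGraph V) : ℕ :=
  sInf {w | ∃ (n : ℕ) (tree : SimpleGraph (Fin n)) (χ : Fin n → Set V),
    IsTreeDecomp G tree χ ∧ ∀ t, (χ t).ncard ≤ w + 1}

/-- `G` is chordal: it has no induced cycle of length at least 4. -/
def IsChordal (G : SimpleGraph V) : Prop :=
  ∀ n : ℕ, 4 ≤ n → ¬ ∃ f : Fin n → V, Function.Injective f ∧
    ∀ i j : Fin n, G.Adj (f i) (f j) ↔
      ((i.val + 1) % n = j.val ∨ (j.val + 1) % n = i.val)

/-- `H` is a minimal chordal completion (fill-in) of `G`. -/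
def IsMinimalChordalCompletion (G H : SimpleGraph V) : Prop :=
  G ≤ H ∧ IsChordal H ∧
    ∀ H' : SimpleGraph V, G ≤ H' → H' ≤ H → IsChordal H' → H' = H

/-- `Ω` is a potential maximal clique of `G`: a maximal clique of some minimal
chordal completion of `G`. -/
def IsPMC (G : SimpleGraph V) (Ω : Set V) : Prop :=
  ∃ H : SimpleGraph V, IsMinimalChordalCompletion G H ∧
    H.IsClique Ω ∧ ∀ Ω' : Set V, H.IsClique Ω' → Ω ⊆ Ω' → Ω' = Ω

/-- The clique number `ω(G)`. -/
noncomputable def cliqueNumber (G : SimpleGraph V) : ℕ :=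
  sSup {n | ∃ s : Finset V, G.IsNClique n s}

/-- A stable (independent) set of vertices. -/
def StableSet (G : SimpleGraph V) (S : Set V) : Prop :=
  ∀ u ∈ S, ∀ w ∈ S, ¬ G.Adj u w

/-- The Ramsey number `R(t, s)`: the least `n` such that every graph on `n`
vertices contains a clique of size `t` or a stable set of size `s`. -/
noncomputable def ramseyNum (t s : ℕ) : ℕ :=
  sInf {n | ∀ G : SimpleGraph (Fin n),
    (∃ K : Finset (Fin n), G.IsNClique t K) ∨
    (∃ S : Finset (Fin n), S.card = s ∧ StableSet G ↑S)}

/-- `G` is `d`-degenerate: every induced subgraph has a vertex of degree less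
than `d` (within that subgraph). -/
def DegenerateLE (G : SimpleGraph V) (d : ℕ) : Prop :=
  ∀ W : Set V, W.Nonempty → ∃ x ∈ W, (W ∩ G.neighborSet x).ncard < d

/-- `D` is the big component for `x`: a component of `G \ N[x]` with more than
half of all vertices. -/
def IsBigComp (G : SimpleGraph V) (x : V) (D : Set V) : Prop :=
  IsCompOf G ((insert x (G.neighborSet x))ᶜ) D ∧ Nat.card V < 2 * D.ncard

/-- The `C`-side of the canonical star separation: `C(x) = {x} ∪ N(B(x))`. -/
def Cside (G : SimpleGraph V) (B : V → Set V) (x : V) : Set V :=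
  insert x (nbhd G (B x))

/-- The `A`-side of the canonical star separation. -/
def Aside (G : SimpleGraph V) (B : V → Set V) (x : V) : Set V :=
  (B x ∪ Cside G B x)ᶜ

/-- Star twins. -/
def StarTwins (G : SimpleGraph V) (B : V → Set V) (x y : V) : Prop :=
  B x = B y ∧ Cside G B x \ {x} = Cside G B y \ {y} ∧
    Aside G B x ∪ {x} = Aside G B y ∪ {y}

/-- The relation `≤_A` (partial order by `A`-sides, ties among star twins
broken by the total order `O`). -/
def leA (G : SimpleGraph V) (B : V → Set V) (O : V → ℕ) (x y : V) : Prop :=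
  x = y ∨ (StarTwins G B x y ∧ O x < O y) ∨
    (¬ StarTwins G B x y ∧ y ∈ Aside G B x)

/-- `Core(S)`: the `≤_A`-minimal elements of `S`. -/
def CoreS (G : SimpleGraph V) (S : Set V) (B : V → Set V) (O : V → ℕ) : Set V :=
  {x ∈ S | ∀ u ∈ S, leA G B O u x → u = x}

/-- The central bag `β(S)`. -/
def centralBag (G : SimpleGraph V) (S : Set V) (B : V → Set V) (O : V → ℕ) :
    Set V :=
  ⋂ x ∈ CoreS G S B O, (B x ∪ Cside G B x)

/-- `G` has a clique cutset. -/
def HasCliqueCutset (G : SimpleGraph V) : Prop :=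
  ∃ K : Set V, G.IsClique K ∧ ∃ u w, u ∉ K ∧ w ∉ K ∧ ¬ ConnectedIn G Kᶜ u w

/-- A chordless (induced) path, as a walk. -/
def IsInducedPathW (G : SimpleGraph V) {a b : V} (P : G.Walk a b) : Prop :=
  P.IsPath ∧ ∀ i j : ℕ, i + 2 ≤ j → j ≤ P.length →
    ¬ G.Adj (P.getVert i) (P.getVert j)

/-- Two `a`–`b` walks have disjoint and anticomplete interiors. -/
def IntDisjAnticomplete (G : SimpleGraph V) {a b : V} (P Q : G.Walk a b) : Prop :=
  ∀ u ∈ P.support, ∀ w ∈ Q.support, u ≠ a → u ≠ b → w ≠ a → w ≠ b →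
    u ≠ w ∧ ¬ G.Adj u w

/-- `G` contains a theta (as an induced subgraph). -/
def HasTheta (G : SimpleGraph V) : Prop :=
  ∃ (a b : V) (P₁ P₂ P₃ : G.Walk a b),
    ¬ G.Adj a b ∧
    IsInducedPathW G P₁ ∧ 2 ≤ P₁.length ∧
    IsInducedPathW G P₂ ∧ 2 ≤ P₂.length ∧
    IsInducedPathW G P₃ ∧ 2 ≤ P₃.length ∧
    IntDisjAnticomplete G P₁ P₂ ∧
    IntDisjAnticomplete G P₁ P₃ ∧
    IntDisjAnticomplete G P₂ P₃


/-
Peel off, in each round, the vertices of degree at most `4d` in what remains. They induce a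
`d`-degenerate graph, so greedy colouring splits them into `d` stable sets. A `d`-degenerate graph
on `m` vertices has fewer than `d m` edges, so fewer than `m / 2` vertices have degree above `4d`:
each round halves what remains, and `log₂ n` rounds use up all `n` vertices.
-/

section Layering

variable {G : SimpleGraph V} {d : ℕ}

structure IsColoringOn (G : SimpleGraph V) (W : Set V) (k : ℕ) (c : V → ℕ) : Prop where
  lt : ∀ x ∈ W, c x < k
  adj_ne : ∀ x ∈ W, ∀ y ∈ W, G.Adj x y → c x ≠ c y

/-- The colour classes of `c` are the layers `S_i`; `ncard_le` bounds the degree of `x` in the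
graph left after deleting the layers before its own. -/
structure IsLayering (G : SimpleGraph V) (W : Set V) (k D : ℕ) (c : V → ℕ) : Prop
    extends IsColoringOn G W k c where
  ncard_le : ∀ x ∈ W, ({u ∈ W | c x ≤ c u} ∩ G.neighborSet x).ncard ≤ D

def highDegree (G : SimpleGraph V) (W : Set V) (D : ℕ) : Set V :=
  {x ∈ W | D < (W ∩ G.neighborSet x).ncard}

theorem isLayering_empty (G : SimpleGraph V) (D : ℕ) (c : V → ℕ) : IsLayering G ∅ 0 D c :=
  ⟨⟨by simp, by simp⟩, by simp⟩

theorem IsLayering.prepend [Finite V] {W R : Set V} [DecidablePred (· ∈ R)] {m k D : ℕ}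
    {a c : V → ℕ} (hlow : ∀ x ∈ W \ R, (W ∩ G.neighborSet x).ncard ≤ D)
    (ha : IsColoringOn G (W \ R) m a) (hc : IsLayering G R k D c) :
    IsLayering G W (m + k) D (fun x => if x ∈ R then m + c x else a x) := by
  refine ⟨⟨fun x hx => ?_, fun x hx y hy hxy => ?_⟩, fun x hx => ?_⟩
  · by_cases hxR : x ∈ R
    · simpa [hxR] using hc.lt x hxR
    · simpa [hxR] using (ha.lt x ⟨hx, hxR⟩).trans_le (Nat.le_add_right m k)
  · by_cases hxR : x ∈ R <;> by_cases hyR : y ∈ R <;> simp only [hxR, hyR, if_true, if_false]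
    · simpa using hc.adj_ne x hxR y hyR hxy
    · have := ha.lt y ⟨hy, hyR⟩; omega
    · have := ha.lt x ⟨hx, hxR⟩; omega
    · exact ha.adj_ne x ⟨hx, hxR⟩ y ⟨hy, hyR⟩ hxy
  · by_cases hxR : x ∈ R
    · refine le_trans (Set.ncard_le_ncard ?_) (hc.ncard_le x hxR)
      rintro u ⟨⟨huW, hxu⟩, hadj⟩
      by_cases huR : u ∈ R
      · simp only [hxR, huR, if_true] at hxu
        exact ⟨⟨huR, by omega⟩, hadj⟩
      · simp only [hxR, huR, if_true, if_false] at hxu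
        have := ha.lt u ⟨huW, huR⟩; omega
    · refine le_trans (Set.ncard_le_ncard ?_) (hlow x ⟨hx, hxR⟩)
      exact fun u hu => ⟨hu.1.1, hu.2⟩

theorem DegenerateLE.exists_isColoringOn [Finite V] (h : DegenerateLE G d) (L : Set V) :
    ∃ a : V → ℕ, IsColoringOn G L d a := by
  classical
  induction hL : L.ncard generalizing L with
  | zero =>
    obtain rfl : L = ∅ := (Set.ncard_eq_zero L.toFinite).1 hL
    exact ⟨0, by simp, by simp⟩
  | succ n ih =>
    obtain ⟨x₀, hx₀, hdeg⟩ := h L (Set.nonempty_of_ncard_ne_zero (by omega))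
    obtain ⟨a, ha⟩ := ih (L \ {x₀}) (by rw [Set.ncard_sdiff_singleton_of_mem hx₀]; omega)
    obtain ⟨i, hi, hfree⟩ : ∃ i ∈ (Finset.range d : Set ℕ),
        i ∉ a '' (L ∩ G.neighborSet x₀) := by
      refine Set.exists_mem_notMem_of_ncard_lt_ncard ?_
      rw [Set.ncard_coe_finset, Finset.card_range]
      exact (Set.ncard_image_le (Set.toFinite _)).trans_lt hdeg
    have hi : i < d := by simpa using hi
    refine ⟨Function.update a x₀ i, fun x hx => ?_, fun x hx y hy hxy => ?_⟩
    · by_cases hxx : x = x₀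
      · simpa [hxx] using hi
      · simpa [hxx] using ha.lt x ⟨hx, hxx⟩
    · have hne : x ≠ y := G.ne_of_adj hxy
      by_cases hxx : x = x₀ <;> by_cases hyx : y = x₀
      · exact absurd (hxx.trans hyx.symm) hne
      · subst hxx
        simp only [Function.update_self, Function.update_of_ne hyx]
        exact fun hiy => hfree ⟨y, ⟨hy, hxy⟩, hiy.symm⟩
      · subst hyx
        simp only [Function.update_self, Function.update_of_ne hxx]
        exact fun hxi => hfree ⟨x, ⟨hx, hxy.symm⟩, hxi⟩
      · simp only [Function.update_of_ne hxx, Function.update_of_ne hyx]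
        exact ha.adj_ne x ⟨hx, hxx⟩ y ⟨hy, hyx⟩ hxy

end Layering

section Counting

open Finset

variable {G : SimpleGraph V} {d : ℕ}

theorem ncard_coe_inter_neighborSet [DecidableRel G.Adj] (s : Finset V) (x : V) :
    ((s : Set V) ∩ G.neighborSet x).ncard = #{y ∈ s | G.Adj x y} := by
  rw [← Set.ncard_coe_finset, coe_filter]
  rfl

theorem sum_card_filter_adj_insert [DecidableEq V] [DecidableRel G.Adj] {x : V} {t : Finset V}
    (hx : x ∉ t) :
    ∑ y ∈ insert x t, #{z ∈ insert x t | G.Adj y z} =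
      ∑ y ∈ t, #{z ∈ t | G.Adj y z} + 2 * #{z ∈ t | G.Adj x z} := by
  have hy : ∀ y ∈ t, #{z ∈ insert x t | G.Adj y z} =
      #{z ∈ t | G.Adj y z} + if G.Adj y x then 1 else 0 := by
    intro y hy
    rw [filter_insert]
    split_ifs
    · exact card_insert_of_notMem fun h => hx (mem_filter.1 h).1
    · rfl
  have hsymm : #{y ∈ t | G.Adj y x} = #{z ∈ t | G.Adj x z} :=
    congrArg card (filter_congr fun y _ => G.adj_comm y x)
  rw [sum_insert hx, filter_insert, if_neg G.irrefl, sum_congr rfl hy, sum_add_distrib,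
    sum_boole, Nat.cast_id, hsymm]
  ring

theorem DegenerateLE.sum_card_filter_adj_le [DecidableRel G.Adj] (h : DegenerateLE G d)
    (s : Finset V) : ∑ x ∈ s, #{y ∈ s | G.Adj x y} ≤ 2 * d * #s := by
  classical
  induction hs : #s generalizing s with
  | zero => simp [card_eq_zero.1 hs]
  | succ n ih =>
    obtain ⟨x₀, hx₀, hdeg⟩ := h s (by simpa [← card_pos] using hs.symm ▸ n.succ_pos)
    rw [ncard_coe_inter_neighborSet] at hdeg
    have hsub : #{y ∈ s.erase x₀ | G.Adj x₀ y} ≤ #{y ∈ s | G.Adj x₀ y} :=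
      card_le_card (filter_subset_filter _ (erase_subset _ _))
    rw [← insert_erase hx₀, sum_card_filter_adj_insert (notMem_erase x₀ s)]
    have := ih (s.erase x₀) (by rw [card_erase_of_mem hx₀]; omega)
    nlinarith

theorem DegenerateLE.ncard_highDegree_mul_le [Finite V] (h : DegenerateLE G d) (W : Set V)
    (D : ℕ) : (highDegree G W D).ncard * (D + 1) ≤ 2 * d * W.ncard := by
  classical
  obtain ⟨s, rfl⟩ := W.toFinite.exists_finset_coe
  have hR : highDegree G s D = ↑{x ∈ s | D < #{y ∈ s | G.Adj x y}} := by
    ext x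
    simp [highDegree, ncard_coe_inter_neighborSet]
  rw [hR, Set.ncard_coe_finset, Set.ncard_coe_finset, ← smul_eq_mul]
  calc #{x ∈ s | D < #{y ∈ s | G.Adj x y}} • (D + 1)
      ≤ ∑ x ∈ s with D < #{y ∈ s | G.Adj x y}, #{y ∈ s | G.Adj x y} :=
        card_nsmul_le_sum _ _ _ fun x hx => (mem_filter.1 hx).2
    _ ≤ ∑ x ∈ s, #{y ∈ s | G.Adj x y} := sum_le_sum_of_subset (filter_subset _ _)
    _ ≤ 2 * d * #s := h.sum_card_filter_adj_le s

end Counting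

section Rounds

variable [Finite V] {G : SimpleGraph V} {d : ℕ}

theorem DegenerateLE.two_mul_ncard_highDegree_add_two_le (h : DegenerateLE G d) (W : Set V)
    (hR : (highDegree G W (4 * d)).Nonempty) :
    2 * (highDegree G W (4 * d)).ncard + 2 ≤ W.ncard := by
  obtain ⟨x, hxW, hx⟩ := hR
  have hdeg : (W ∩ G.neighborSet x).ncard + 1 ≤ W.ncard := by
    have := Set.ncard_le_ncard (s := W ∩ G.neighborSet x) (t := W \ {x})
      fun y hy => ⟨hy.1, fun hyx => G.ne_of_adj hy.2 (Set.mem_singleton_iff.1 hyx).symm⟩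
    rw [Set.ncard_sdiff_singleton_of_mem hxW] at this
    have : 0 < W.ncard := (Set.ncard_pos (Set.toFinite _)).2 ⟨x, hxW⟩
    omega
  have := h.ncard_highDegree_mul_le W (4 * d)
  nlinarith

theorem DegenerateLE.ncard_highDegree_add_two_le (h : DegenerateLE G d) {T : ℕ} (hT : 1 ≤ T)
    {W : Set V} (hW : W.ncard < 2 ^ (T + 1)) : (highDegree G W (4 * d)).ncard + 2 ≤ 2 ^ T := by
  have hT2 : 2 ≤ 2 ^ T := Nat.le_self_pow (by omega) 2
  rw [pow_succ] at hW
  rcases (highDegree G W (4 * d)).eq_empty_or_nonempty with hR | hR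
  · simpa [hR] using hT2
  · have := h.two_mul_ncard_highDegree_add_two_le W hR
    omega

theorem DegenerateLE.exists_isLayering_of_highDegree (h : DegenerateLE G d) {W : Set V}
    {k D : ℕ} {c : V → ℕ} (hc : IsLayering G (highDegree G W D) k D c) :
    ∃ c' : V → ℕ, IsLayering G W (d + k) D c' := by
  classical
  have hlow : ∀ x ∈ W \ highDegree G W D, (W ∩ G.neighborSet x).ncard ≤ D :=
    fun x hx => not_lt.1 fun hD => hx.2 ⟨hx.1, hD⟩
  obtain ⟨a, ha⟩ := h.exists_isColoringOn (W \ highDegree G W D)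
  exact ⟨_, hc.prepend hlow ha⟩

theorem DegenerateLE.exists_isLayering (h : DegenerateLE G d) {T : ℕ} (hT : 1 ≤ T) (W : Set V)
    (hW : W.ncard < 2 ^ (T + 1)) : ∃ c : V → ℕ, IsLayering G W (d * T) (4 * d) c := by
  induction T, hT using Nat.le_induction generalizing W with
  | base =>
    have hR : highDegree G W (4 * d) = ∅ := by
      have := h.ncard_highDegree_add_two_le le_rfl hW
      exact (Set.ncard_eq_zero (Set.toFinite _)).1 (by omega)
    obtain ⟨c, hc⟩ := h.exists_isLayering_of_highDegree (hR ▸ isLayering_empty G (4 * d) 0)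
    exact ⟨c, by simpa using hc⟩
  | succ T hT ih =>
    have := h.ncard_highDegree_add_two_le (by omega) hW
    obtain ⟨c, hc⟩ := ih (highDegree G W (4 * d)) (by omega)
    simpa [mul_add, add_comm] using h.exists_isLayering_of_highDegree hc

end Rounds

/-- A `d`-degenerate graph on `n ≥ 2` vertices has a partition `S₁, …, S_k`
into stable sets with `k ≤ d·log₂ n` such that every vertex of `S_i` has degree
at most `4d` in the subgraph induced on `S_i ∪ ⋯ ∪ S_k`. -/
theorem stmt7 [Finite V] (G : SimpleGraph V) (d : ℕ) (h : DegenerateLE G d)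
    (hn : 2 ≤ Nat.card V) :
    ∃ (k : ℕ) (S : Fin k → Set V),
      k ≤ d * Nat.log 2 (Nat.card V) ∧
      (∀ i j, i ≠ j → Disjoint (S i) (S j)) ∧
      (⋃ i, S i) = Set.univ ∧
      (∀ i, StableSet G (S i)) ∧
      ∀ i, ∀ x ∈ S i,
        ({u | ∃ j, i ≤ j ∧ u ∈ S j} ∩ G.neighborSet x).ncard ≤ 4 * d := by
  obtain ⟨c, hc⟩ := h.exists_isLayering (Nat.log_pos one_lt_two hn) Set.univ
    (by simpa using Nat.lt_pow_succ_log_self one_lt_two (Nat.card V))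
  refine ⟨_, fun i => {x | c x = i}, le_rfl, fun i j hij => ?_, ?_, ?_, ?_⟩
  · exact Set.disjoint_left.2 fun x hi hj => hij (Fin.ext (hi.symm.trans hj))
  · exact Set.eq_univ_of_forall fun x => Set.mem_iUnion.2 ⟨⟨c x, hc.lt x trivial⟩, rfl⟩
  · exact fun i u hu w hw hadj => hc.adj_ne u trivial w trivial hadj (hu.trans hw.symm)
  · intro i x hx
    refine le_trans (Set.ncard_le_ncard ?_) (hc.ncard_le x trivial)
    rintro u ⟨⟨j, hij, hu⟩, hadj⟩
    refine ⟨⟨trivial, ?_⟩, hadj⟩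
    rw [show c x = i from hx, show c u = j from hu]
    exact hij
end

section
/- Let S be a stable set of unbalanced vertices of G, β(S) = ⋂_{v ∈ Core(S)} (B(v) ∪ C(v)) the central bag. Then: (1) C(v) ⊆ β(S) for every v ∈ Core(S); and (2) for every component D of G \ β(S) there exists v ∈ Core(S) with D ⊆ A(v), and for any such v, N(D) ⊆ C(v). -/
universe u v

variable {V : Type u}

/-- Every neighbor of the big component `B(u)` outside it is a neighbor of `u`. -/
lemma adj_of_mem_nbhd_comp {G : SimpleGraph V} {u : V} {Bu : Set V}
    (hcomp : IsCompOf G ((insert u (G.neighborSet u))ᶜ) Bu) :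
    ∀ x ∈ nbhd G Bu, G.Adj u x := by
  rintro x ⟨hxB, b, hb, hadj⟩
  by_contra hne
  have hbu : b ∈ (insert u (G.neighborSet u))ᶜ := hcomp.2.1 hb
  rcases eq_or_ne x u with rfl | hxu
  · exact hbu (Set.mem_insert_iff.mpr (Or.inr hadj.symm))
  · have hx : x ∈ (insert u (G.neighborSet u))ᶜ := by
      intro hx
      rcases Set.mem_insert_iff.mp hx with rfl | hx
      · exact hxu rfl
      · exact hne hx
    exact hxB (hcomp.2.2.2 b hb x hx hadj)

lemma starTwins_symm {G : SimpleGraph V} {B : V → Set V} {x y : V}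
    (h : StarTwins G B x y) : StarTwins G B y x :=
  ⟨h.1.symm, h.2.1.symm, h.2.2.symm⟩

/-- Two distinct core vertices lie in each other's big components. -/
lemma core_mem_B {G : SimpleGraph V} {S : Set V} {B : V → Set V} {O : V → ℕ}
    (hstable : StableSet G S)
    (hB : ∀ v ∈ S, IsBigComp G v (B v))
    (hO : ∀ x ∈ S, ∀ y ∈ S, O x = O y → x = y)
    {u v : V} (hu : u ∈ CoreS G S B O) (hv : v ∈ CoreS G S B O)
    (hne : u ≠ v) : u ∈ B v := by
  have hOne : O u ≠ O v := fun h => hne (hO u hu.1 v hv.1 h)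
  have hST : ¬ StarTwins G B v u := by
    intro h
    rcases lt_or_gt_of_ne hOne with hlt | hgt
    · exact hne (hv.2 u hu.1 (Or.inr (Or.inl ⟨starTwins_symm h, hlt⟩)))
    · exact hne.symm (hu.2 v hv.1 (Or.inr (Or.inl ⟨h, hgt⟩)))
  have hA : u ∉ Aside G B v := fun hA =>
    hne.symm (hu.2 v hv.1 (Or.inr (Or.inr ⟨hST, hA⟩)))
  have hBC : u ∈ B v ∪ Cside G B v := by
    by_contra h
    exact hA h
  rcases hBC with h | h
  · exact h
  · rcases Set.mem_insert_iff.mp h with rfl | h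
    · exact absurd rfl hne
    · exact absurd (adj_of_mem_nbhd_comp (hB v hv.1).1 u h)
        (hstable v hv.1 u hu.1)

/-- For `u, v ∈ Core(S)`, `C(u) ∩ A(v) = ∅`. -/
lemma core_C_A_disjoint {G : SimpleGraph V} {S : Set V} {B : V → Set V}
    {O : V → ℕ}
    (hstable : StableSet G S)
    (hB : ∀ v ∈ S, IsBigComp G v (B v))
    (hO : ∀ x ∈ S, ∀ y ∈ S, O x = O y → x = y)
    {u v : V} (hu : u ∈ CoreS G S B O) (hv : v ∈ CoreS G S B O) :
    ∀ x ∈ Cside G B u, x ∉ Aside G B v := by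
  intro x hx hxA
  rcases eq_or_ne u v with rfl | hne
  · exact hxA (Or.inr hx)
  · have huB : u ∈ B v := core_mem_B hstable hB hO hu hv hne
    rcases Set.mem_insert_iff.mp hx with rfl | hx
    · exact hxA (Or.inl huB)
    · have hadj : G.Adj u x := adj_of_mem_nbhd_comp (hB u hu.1).1 x hx
      have hxBv : x ∉ B v := fun h => hxA (Or.inl h)
      exact hxA (Or.inr (Set.mem_insert_iff.mpr
        (Or.inr ⟨hxBv, u, huB, hadj⟩)))

/-- Propagate membership in `T` along a walk staying in `D`. -/
lemma walk_closed {G : SimpleGraph V} {D T : Set V}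
    (hstep : ∀ p ∈ T, ∀ q ∈ D, G.Adj p q → q ∈ T) :
    ∀ {a b : V} (w : G.Walk a b), (∀ x ∈ w.support, x ∈ D) → a ∈ T → b ∈ T := by
  intro a b w
  induction w with
  | nil => exact fun _ h => h
  | @cons a c b h p ih =>
    intro hsupp ha
    have hc : c ∈ D := hsupp c (by
      rw [SimpleGraph.Walk.support_cons]
      exact List.mem_cons_of_mem _ p.start_mem_support)
    exact ih (fun x hx => hsupp x (by
      rw [SimpleGraph.Walk.support_cons]
      exact List.mem_cons_of_mem _ hx)) (hstep a ha c hc h)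

/-- Properties of the central bag `β(S)`: it contains `C(v)` for every
`v ∈ Core(S)`, and every component `D` of `G \ β(S)` satisfies `D ⊆ A(v)` for
some `v ∈ Core(S)`, with `N(D) ⊆ C(v)` for any such `v`. -/
theorem stmt15 [Finite V] (G : SimpleGraph V) (S : Set V) (B : V → Set V)
    (O : V → ℕ) (hstable : StableSet G S)
    (hB : ∀ v ∈ S, IsBigComp G v (B v))
    (hO : ∀ x ∈ S, ∀ y ∈ S, O x = O y → x = y) :
    (∀ v ∈ CoreS G S B O, Cside G B v ⊆ centralBag G S B O) ∧
    ∀ D, IsCompOf G (centralBag G S B O)ᶜ D →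
      (∃ v ∈ CoreS G S B O, D ⊆ Aside G B v) ∧
      (∀ v ∈ CoreS G S B O, D ⊆ Aside G B v → nbhd G D ⊆ Cside G B v) := by
  have h1 : ∀ v ∈ CoreS G S B O, Cside G B v ⊆ centralBag G S B O := by
    intro v hv x hx
    refine Set.mem_iInter₂.mpr fun w hw => ?_
    by_contra hxw
    exact core_C_A_disjoint hstable hB hO hv hw x hx hxw
  refine ⟨h1, ?_⟩
  intro D hD
  have hDsub : D ⊆ (centralBag G S B O)ᶜ := hD.2.1
  have hmem : ∀ x ∈ D, ∃ v ∈ CoreS G S B O, x ∈ Aside G B v := by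
    intro x hx
    have hx' := hDsub hx
    rw [Set.mem_compl_iff, centralBag] at hx'
    simp only [Set.mem_iInter₂, not_forall] at hx'
    obtain ⟨v, hv, hxv⟩ := hx'
    exact ⟨v, hv, hxv⟩
  have hAsub : ∀ v ∈ CoreS G S B O, Aside G B v ⊆ (centralBag G S B O)ᶜ := by
    intro v hv x hx hxbag
    exact hx (Set.mem_iInter₂.mp hxbag v hv)
  have hstep : ∀ v ∈ CoreS G S B O,
      ∀ p ∈ Aside G B v, ∀ q ∈ D, G.Adj p q → q ∈ Aside G B v := by
    intro v hv p hp q hq hadj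
    intro hqBC
    rcases hqBC with hqB | hqC
    · have hpB : p ∉ B v := fun h => hp (Or.inl h)
      exact hp (Or.inr (Set.mem_insert_iff.mpr
        (Or.inr ⟨hpB, q, hqB, hadj.symm⟩)))
    · exact hDsub hq (h1 v hv hqC)
  constructor
  · obtain ⟨d, hd⟩ := hD.1
    obtain ⟨v, hv, hdv⟩ := hmem d hd
    refine ⟨v, hv, fun w hw => ?_⟩
    obtain ⟨p, hp⟩ := hD.2.2.1 d hd w hw
    exact walk_closed (hstep v hv) p hp hdv
  · rintro v hv hDA w ⟨hwD, d, hd, hadj⟩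
    have hdA : d ∈ Aside G B v := hDA hd
    by_cases hwB : w ∈ B v
    · exact absurd (Or.inr (Set.mem_insert_iff.mpr
        (Or.inr ⟨fun h => hdA (Or.inl h), w, hwB, hadj.symm⟩)) :
          d ∈ B v ∪ Cside G B v) hdA
    · by_cases hwC : w ∈ Cside G B v
      · exact hwC
      · have hwA : w ∈ Aside G B v := by
          intro h
          rcases h with h | h
          · exact hwB h
          · exact hwC h
        exact absurd (hD.2.2.2 d hd w (hAsub v hv hwA) hadj) hwD
end

section
/- Let G be a graph, β ⊆ V(G) an induced subgraph, and suppose the components D_1,…,D_m of G\β satisfy: for each i there is a designated vertex r_i ∈ β with N(D_i) ⊆ C_i for some set C_i ⊆ N[r_i] ∩ β with r_i ∈ C_i, and all C_i \ {r_i} are complete to r_i (i.e., C_i ⊆ {r_i} ∪ N(r_i)). Given a tree decomposition (T_β, χ_β) of G[β] and tree decompositions (T_i, χ_i) of D_i, form T by joining each T_i to a node of T_β whose bag contains r_i, and set χ(u) = χ_β(u) ∪ ⋃_{r_i ∈ χ_β(u)} C_i for u ∈ T_β, and χ(u) = χ_i(u) ∪ C_i for u ∈ T_i. Then (T, χ)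 is a tree decomposition of G. -/
/-!
Every edge of the glued tree `T` is a bridge, because it is pulled back from a bridge of `T_β`, of
some `T_i`, or of the tree on two vertices, along a projection of `T` that contracts all other
edges. Every vertex and edge of `G` lies in a bag of `T_β` or of the `T_i` it meets, `N(D_i)` being
inside `C_i`. A vertex outside `β` only lies in bags of its own `T_i`, so its trace is the one in
`T_i`. The trace of `x ∈ β` consists of its trace in `T_β` together with all of `T_i` and the
nodes of `T_β` holding `r_i`, for the `i` with `x ∈ C_i`; these are joined to the former through
the edge from `T_i` to its attachment node and through the trace of `r_i`.
-/

universe u v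

variable {V : Type u}

namespace SimpleGraph

variable {W X : Type*} {H : SimpleGraph W} {K : SimpleGraph X}

theorem Reachable.of_eq_or_adj (f : W → X)
    (hf : ∀ a b, H.Adj a b → f a = f b ∨ K.Adj (f a) (f b)) {a b : W} (h : H.Reachable a b) :
    K.Reachable (f a) (f b) := by
  obtain ⟨p⟩ := h
  induction p with
  | nil => rfl
  | cons h _ ih => exact (hf _ _ h).elim (· ▸ ih) (·.reachable.trans ih)

theorem IsBridge.of_map (f : W → X) {u v : W}
    (hf : ∀ a b, H.Adj a b → f a ≠ f b →
      K.Adj (f a) (f b) ∧ (s(f a, f b) = s(f u, f v) → s(a, b) = s(u, v)))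
    (hK : K.IsBridge s(f u, f v)) : H.IsBridge s(u, v) := by
  refine isBridge_iff.2 fun h => isBridge_iff.1 hK (h.of_eq_or_adj f fun a b hab => ?_)
  simp only [deleteEdges_adj, Set.mem_singleton_iff] at hab ⊢
  refine or_iff_not_imp_left.2 fun hne => ?_
  obtain ⟨hadj, hfib⟩ := hf a b hab.1 hne
  exact ⟨hadj, fun he => hab.2 (hfib he)⟩

theorem isBridge_top_bool : (⊤ : SimpleGraph Bool).IsBridge s(false, true) := by
  refine isBridge_iff.2 (not_reachable_of_neighborSet_right_eq_empty Bool.false_ne_true ?_)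
  ext b
  cases b <;> simp

end SimpleGraph

open SimpleGraph

structure IsTreeGluing {ι Tb : Type*} {Ti : ι → Type*} (tree : SimpleGraph (Tb ⊕ Σ i, Ti i))
    (treeb : SimpleGraph Tb) (treei : ∀ i, SimpleGraph (Ti i)) (att : ι → Tb)
    (root : ∀ i, Ti i) : Prop where
  adj_inl_inl : ∀ s t, tree.Adj (.inl s) (.inl t) ↔ treeb.Adj s t
  adj_inr_inr : ∀ i (s t : Ti i), tree.Adj (.inr ⟨i, s⟩) (.inr ⟨i, t⟩) ↔ (treei i).Adj s t
  not_adj_inr_inr : ∀ i j, i ≠ j → ∀ (s : Ti i) (t : Ti j),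
    ¬ tree.Adj (.inr ⟨i, s⟩) (.inr ⟨j, t⟩)
  adj_inl_inr : ∀ i (s : Ti i) t, tree.Adj (.inl t) (.inr ⟨i, s⟩) ↔ t = att i ∧ s = root i

namespace IsTreeGluing

variable {ι Tb : Type*} {Ti : ι → Type*} {tree : SimpleGraph (Tb ⊕ Σ i, Ti i)}
  {treeb : SimpleGraph Tb} {treei : ∀ i, SimpleGraph (Ti i)} {att : ι → Tb}
  {root : ∀ i, Ti i}

def inlHom (hg : IsTreeGluing tree treeb treei att root) : treeb →g tree :=
  ⟨Sum.inl, (hg.adj_inl_inl _ _).2⟩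

def inrHom (hg : IsTreeGluing tree treeb treei att root) (i : ι) : treei i →g tree :=
  ⟨fun s => .inr ⟨i, s⟩, (hg.adj_inr_inr i _ _).2⟩

theorem adj_att_root (hg : IsTreeGluing tree treeb treei att root) (i : ι) :
    tree.Adj (.inl (att i)) (.inr ⟨i, root i⟩) :=
  (hg.adj_inl_inr i _ _).2 ⟨rfl, rfl⟩

theorem adj_inr_inl (hg : IsTreeGluing tree treeb treei att root) {i : ι} {s : Ti i} {t : Tb} :
    tree.Adj (.inr ⟨i, s⟩) (.inl t) ↔ t = att i ∧ s = root i :=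
  adj_comm _ _ _ |>.trans (hg.adj_inl_inr i s t)

theorem eq_of_adj_inr_inr (hg : IsTreeGluing tree treeb treei att root) {i j : ι} {s : Ti i}
    {t : Ti j} (h : tree.Adj (.inr ⟨i, s⟩) (.inr ⟨j, t⟩)) : i = j :=
  by_contra fun hij => hg.not_adj_inr_inr i j hij s t h

theorem reachable_inl_att (hg : IsTreeGluing tree treeb treei att root)
    (hi : ∀ i, (treei i).Connected) (i : ι) (s : Ti i) :
    tree.Reachable (.inr ⟨i, s⟩) (.inl (att i)) :=
  (((hi i).preconnected s (root i)).map (hg.inrHom i)).trans (hg.adj_att_root i).symm.reachable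

theorem connected (hg : IsTreeGluing tree treeb treei att root) (hb : treeb.Connected)
    (hi : ∀ i, (treei i).Connected) : tree.Connected := by
  have hbase : ∀ v, ∃ t, tree.Reachable v (.inl t) := by
    rintro (t | ⟨i, s⟩)
    · exact ⟨t, .rfl⟩
    · exact ⟨att i, hg.reachable_inl_att hi i s⟩
  have : Nonempty Tb := hb.nonempty
  refine ⟨fun v w => ?_⟩
  obtain ⟨t, hv⟩ := hbase v
  obtain ⟨t', hw⟩ := hbase w
  exact hv.trans (((hb.preconnected t t').map hg.inlHom).trans hw.symm)

open Classical in
noncomputable def fiberProj (root : ∀ i, Ti i) (i : ι) : Tb ⊕ (Σ j, Ti j) → Ti i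
  | .inl _ => root i
  | .inr ⟨j, s⟩ => if h : j = i then h ▸ s else root i

@[simp] theorem fiberProj_inl (root : ∀ i, Ti i) (i : ι) (t : Tb) :
    fiberProj (Tb := Tb) root i (.inl t) = root i := rfl

@[simp] theorem fiberProj_inr_self (root : ∀ i, Ti i) (i : ι) (s : Ti i) :
    fiberProj (Tb := Tb) root i (.inr ⟨i, s⟩) = s := by
  simp [fiberProj]

@[simp] theorem fiberProj_inr_of_ne (root : ∀ i, Ti i) {i j : ι} (h : j ≠ i) (s : Ti j) :
    fiberProj (Tb := Tb) root i (.inr ⟨j, s⟩) = root i := by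
  simp [fiberProj, h]

theorem isBridge_inl_inl (hg : IsTreeGluing tree treeb treei att root) {s t : Tb}
    (h : treeb.IsBridge s(s, t)) : tree.IsBridge s(.inl s, .inl t) := by
  refine IsBridge.of_map (Sum.elim id fun q => att q.1) ?_ h
  rintro (a | ⟨i, a⟩) (b | ⟨j, b⟩) hab hne
  · exact ⟨(hg.adj_inl_inl a b).1 hab, fun he => by simpa using he⟩
  · exact absurd ((hg.adj_inl_inr j b a).1 hab).1 hne
  · exact absurd (hg.adj_inr_inl.1 hab).1.symm hne
  · exact absurd (congrArg att (hg.eq_of_adj_inr_inr hab)) hne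

theorem isBridge_inr_inr (hg : IsTreeGluing tree treeb treei att root) {i : ι} {s t : Ti i}
    (h : (treei i).IsBridge s(s, t)) : tree.IsBridge s(.inr ⟨i, s⟩, .inr ⟨i, t⟩) := by
  refine IsBridge.of_map (K := treei i) (fiberProj root i) ?_ (by simpa using h)
  rintro (a | ⟨j, a⟩) (b | ⟨j', b⟩) hab hne
  · simp at hne
  · obtain ⟨-, rfl⟩ := (hg.adj_inl_inr j' b a).1 hab
    by_cases hj : j' = i
    · subst hj; simp at hne
    · simp [hj] at hne
  · obtain ⟨-, rfl⟩ := hg.adj_inr_inl.1 hab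
    by_cases hj : j = i
    · subst hj; simp at hne
    · simp [hj] at hne
  · obtain rfl := hg.eq_of_adj_inr_inr hab
    by_cases hj : j = i
    · subst hj
      simp only [fiberProj_inr_self]
      exact ⟨(hg.adj_inr_inr j a b).1 hab, fun he => by simpa using he⟩
    · simp [hj] at hne

theorem isBridge_att_root (hg : IsTreeGluing tree treeb treei att root) (i : ι) :
    tree.IsBridge s(.inl (att i), .inr ⟨i, root i⟩) := by
  classical
  refine IsBridge.of_map (K := ⊤) (Sum.elim (fun _ => false) fun q => decide (q.1 = i)) ?_
    (by simpa using isBridge_top_bool)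
  rintro (a | ⟨j, a⟩) (b | ⟨j', b⟩) hab hne
  · simp at hne
  · obtain ⟨rfl, rfl⟩ := (hg.adj_inl_inr j' b a).1 hab
    by_cases hj : j' = i
    · subst hj; simp
    · simp [hj] at hne
  · obtain ⟨rfl, rfl⟩ := hg.adj_inr_inl.1 hab
    by_cases hj : j = i
    · subst hj; simp [Sym2.eq_swap]
    · simp [hj] at hne
  · obtain rfl := hg.eq_of_adj_inr_inr hab
    simp at hne

theorem isAcyclic (hg : IsTreeGluing tree treeb treei att root) (hb : treeb.IsAcyclic)
    (hi : ∀ i, (treei i).IsAcyclic) : tree.IsAcyclic := by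
  refine isAcyclic_iff_forall_adj_isBridge.2 ?_
  rintro (s | ⟨i, s⟩) (t | ⟨j, t⟩) h
  · exact hg.isBridge_inl_inl
      (isAcyclic_iff_forall_adj_isBridge.1 hb ((hg.adj_inl_inl s t).1 h))
  · obtain ⟨rfl, rfl⟩ := (hg.adj_inl_inr j t s).1 h
    exact hg.isBridge_att_root j
  · obtain ⟨rfl, rfl⟩ := hg.adj_inr_inl.1 h
    exact Sym2.eq_swap ▸ hg.isBridge_att_root i
  · obtain rfl := hg.eq_of_adj_inr_inr h
    exact hg.isBridge_inr_inr
      (isAcyclic_iff_forall_adj_isBridge.1 (hi i) ((hg.adj_inr_inr i s t).1 h))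

theorem isTree (hg : IsTreeGluing tree treeb treei att root) (hb : treeb.IsTree)
    (hi : ∀ i, (treei i).IsTree) : tree.IsTree :=
  ⟨hg.connected hb.connected fun i => (hi i).connected,
    hg.isAcyclic hb.isAcyclic fun i => (hi i).isAcyclic⟩

end IsTreeGluing

theorem ConnectedIn.symm {W : Type*} {G : SimpleGraph W} {S : Set W} {u w : W}
    (h : ConnectedIn G S u w) : ConnectedIn G S w u :=
  let ⟨p, hp⟩ := h
  ⟨p.reverse, by simpa using hp⟩

theorem ConnectedIn.trans {W : Type*} {G : SimpleGraph W} {S : Set W} {u v w : W}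
    (h : ConnectedIn G S u v) (h' : ConnectedIn G S v w) : ConnectedIn G S u w :=
  let ⟨p, hp⟩ := h
  let ⟨q, hq⟩ := h'
  ⟨p.append q, fun x hx => (Walk.mem_support_append_iff _ _).1 hx |>.elim (hp x) (hq x)⟩

theorem ConnectedIn.of_adj {W Y : Type*} {G : SimpleGraph W} {u w : W} {χ : W → Set Y} {y : Y}
    (h : G.Adj u w) (hu : y ∈ χ u) (hw : y ∈ χ w) : ConnectedIn G {t | y ∈ χ t} u w :=
  ⟨h.toWalk, by simp [hu, hw]⟩

theorem ConnectedIn.map_trace {W X Y : Type*} {G : SimpleGraph W} {H : SimpleGraph X}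
    {S : Set W} {u w : W} (h : ConnectedIn G S u w) (f : G →g H) {χ : X → Set Y} {y : Y}
    (hS : ∀ a ∈ S, y ∈ χ (f a)) : ConnectedIn H {b | y ∈ χ b} (f u) (f w) :=
  let ⟨p, hp⟩ := h
  ⟨p.map f, by simpa using fun x hx => hS x (hp x hx)⟩

theorem connectedIn_univ {W : Type*} {G : SimpleGraph W} {u w : W} :
    ConnectedIn G Set.univ u w ↔ G.Reachable u w :=
  ⟨fun ⟨p, _⟩ => ⟨p⟩, fun ⟨p⟩ => ⟨p, fun _ _ => trivial⟩⟩

theorem IsCompOf.subset {G : SimpleGraph V} {S D : Set V} (h : IsCompOf G S D) : D ⊆ S :=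
  h.2.1

section GluedBags

variable {ι Tb : Type*} {Ti : ι → Type*} {G : SimpleGraph V} {β : Set V} {D : ι → Set V}
  {r : ι → V} {C : ι → Set V} {treeb : SimpleGraph Tb} {χb : Tb → Set V}
  {treei : ∀ i, SimpleGraph (Ti i)} {χi : ∀ i, Ti i → Set V} {att : ι → Tb}
  {root : ∀ i, Ti i} {tree : SimpleGraph (Tb ⊕ Σ i, Ti i)} {x y : V}

def gluedBags (χb : Tb → Set V) (χi : ∀ i, Ti i → Set V) (r : ι → V) (C : ι → Set V) :
    Tb ⊕ (Σ i, Ti i) → Set V :=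
  Sum.elim (fun t => χb t ∪ ⋃ i, ⋃ (_ : r i ∈ χb t), C i) (fun p => χi p.1 p.2 ∪ C p.1)

@[simp] theorem mem_gluedBags_inl {t : Tb} :
    x ∈ gluedBags χb χi r C (.inl t) ↔ x ∈ χb t ∨ ∃ i, r i ∈ χb t ∧ x ∈ C i := by
  simp [gluedBags]

@[simp] theorem mem_gluedBags_inr {i : ι} {s : Ti i} :
    x ∈ gluedBags χb χi r C (.inr ⟨i, s⟩) ↔ x ∈ χi i s ∨ x ∈ C i := by
  simp [gluedBags]

theorem exists_mem_gluedBags (hdecb : IsTreeDecompOn G β treeb χb)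
    (hdeci : ∀ i, IsTreeDecompOn G (D i) (treei i) (χi i)) (hcover : ∀ x, x ∉ β → ∃ i, x ∈ D i)
    (x : V) : ∃ n, x ∈ gluedBags χb χi r C n := by
  by_cases hx : x ∈ β
  · obtain ⟨t, ht⟩ := hdecb.mem_bag x hx
    exact ⟨.inl t, mem_gluedBags_inl.2 (.inl ht)⟩
  · obtain ⟨i, hi⟩ := hcover x hx
    obtain ⟨s, hs⟩ := (hdeci i).mem_bag x hi
    exact ⟨.inr ⟨i, s⟩, mem_gluedBags_inr.2 (.inl hs)⟩

theorem exists_mem_gluedBags_of_adj_of_mem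
    (hdeci : ∀ i, IsTreeDecompOn G (D i) (treei i) (χi i)) (hND : ∀ i, nbhd G (D i) ⊆ C i)
    {i : ι} (hx : x ∈ D i) (hxy : G.Adj x y) :
    ∃ n, x ∈ gluedBags χb χi r C n ∧ y ∈ gluedBags χb χi r C n := by
  by_cases hy : y ∈ D i
  · obtain ⟨s, hxs, hys⟩ := (hdeci i).edge_bag x hx y hy hxy
    exact ⟨.inr ⟨i, s⟩, mem_gluedBags_inr.2 (.inl hxs), mem_gluedBags_inr.2 (.inl hys)⟩
  · obtain ⟨s, hxs⟩ := (hdeci i).mem_bag x hx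
    exact ⟨.inr ⟨i, s⟩, mem_gluedBags_inr.2 (.inl hxs),
      mem_gluedBags_inr.2 (.inr (hND i ⟨hy, x, hx, hxy⟩))⟩

theorem exists_adj_mem_gluedBags (hdecb : IsTreeDecompOn G β treeb χb)
    (hdeci : ∀ i, IsTreeDecompOn G (D i) (treei i) (χi i)) (hcover : ∀ x, x ∉ β → ∃ i, x ∈ D i)
    (hND : ∀ i, nbhd G (D i) ⊆ C i) (hxy : G.Adj x y) :
    ∃ n, x ∈ gluedBags χb χi r C n ∧ y ∈ gluedBags χb χi r C n := by
  by_cases hx : x ∈ β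
  · by_cases hy : y ∈ β
    · obtain ⟨t, hxt, hyt⟩ := hdecb.edge_bag x hx y hy hxy
      exact ⟨.inl t, mem_gluedBags_inl.2 (.inl hxt), mem_gluedBags_inl.2 (.inl hyt)⟩
    · obtain ⟨i, hi⟩ := hcover y hy
      obtain ⟨n, hyn, hxn⟩ := exists_mem_gluedBags_of_adj_of_mem hdeci hND hi hxy.symm
      exact ⟨n, hxn, hyn⟩
  · obtain ⟨i, hi⟩ := hcover x hx
    exact exists_mem_gluedBags_of_adj_of_mem hdeci hND hi hxy

theorem connectedIn_gluedBags_of_not_mem (hg : IsTreeGluing tree treeb treei att root)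
    (hdecb : IsTreeDecompOn G β treeb χb) (hdeci : ∀ i, IsTreeDecompOn G (D i) (treei i) (χi i))
    (hdisj : ∀ i j, i ≠ j → Disjoint (D i) (D j)) (hCβ : ∀ i, C i ⊆ β) (hx : x ∉ β) {i : ι}
    (hxi : x ∈ D i) {n₁ n₂ : Tb ⊕ Σ i, Ti i} (h₁ : x ∈ gluedBags χb χi r C n₁)
    (h₂ : x ∈ gluedBags χb χi r C n₂) :
    ConnectedIn tree {n | x ∈ gluedBags χb χi r C n} n₁ n₂ := by
  have hnode : ∀ n, x ∈ gluedBags χb χi r C n → ∃ s, n = .inr ⟨i, s⟩ ∧ x ∈ χi i s := by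
    rintro (t | ⟨j, s⟩) hn
    · rcases mem_gluedBags_inl.1 hn with h | ⟨j, -, h⟩
      exacts [(hx (hdecb.bags_subset t h)).elim, (hx (hCβ j h)).elim]
    · rcases mem_gluedBags_inr.1 hn with h | h
      · obtain rfl : j = i := by_contra fun hji =>
          Set.disjoint_left.1 (hdisj j i hji) ((hdeci j).bags_subset s h) hxi
        exact ⟨s, rfl, h⟩
      · exact (hx (hCβ j h)).elim
  obtain ⟨s₁, rfl, hs₁⟩ := hnode n₁ h₁
  obtain ⟨s₂, rfl, hs₂⟩ := hnode n₂ h₂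
  exact ((hdeci i).trace_connected x s₁ hs₁ s₂ hs₂).map_trace (hg.inrHom i)
    fun s hs => mem_gluedBags_inr.2 (.inl hs)

/-- A node of `T_β` whose bag gained `x` from `C_i` reaches the trace of `x` in `T_β` along the
trace of `r_i`: as `x = r_i` or `x ∼ r_i`, some bag of `T_β` holds both. -/
theorem connectedIn_inl_gluedBags_of_mem (hg : IsTreeGluing tree treeb treei att root)
    (hdecb : IsTreeDecompOn G β treeb χb)
    (hCsub : ∀ i, C i ⊆ insert (r i) (G.neighborSet (r i)) ∩ β) (hx : x ∈ β) {tx t : Tb}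
    (htx : x ∈ χb tx) (ht : x ∈ gluedBags χb χi r C (.inl t)) :
    ConnectedIn tree {n | x ∈ gluedBags χb χi r C n} (.inl t) (.inl tx) := by
  have hbase : ∀ t, x ∈ χb t →
      ConnectedIn tree {n | x ∈ gluedBags χb χi r C n} (.inl t) (.inl tx) := fun t ht =>
    (hdecb.trace_connected x t ht tx htx).map_trace hg.inlHom
      fun a ha => mem_gluedBags_inl.2 (.inl ha)
  rcases mem_gluedBags_inl.1 ht with ht | ⟨i, hri, hxC⟩
  · exact hbase t ht
  rcases (hCsub i hxC).1 with rfl | hadj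
  · exact hbase t hri
  obtain ⟨t₀, hrt₀, hxt₀⟩ := hdecb.edge_bag _ (hdecb.bags_subset t hri) x hx hadj
  exact ((hdecb.trace_connected (r i) t hri t₀ hrt₀).map_trace hg.inlHom
    fun a ha => mem_gluedBags_inl.2 (.inr ⟨i, ha, hxC⟩)).trans (hbase t₀ hxt₀)

theorem connectedIn_gluedBags_of_mem (hg : IsTreeGluing tree treeb treei att root)
    (hdecb : IsTreeDecompOn G β treeb χb) (hdeci : ∀ i, IsTreeDecompOn G (D i) (treei i) (χi i))
    (hDβ : ∀ i, D i ⊆ βᶜ) (hCsub : ∀ i, C i ⊆ insert (r i) (G.neighborSet (r i)) ∩ β)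
    (hatt : ∀ i, r i ∈ χb (att i)) (hx : x ∈ β) {n₁ n₂ : Tb ⊕ Σ i, Ti i}
    (h₁ : x ∈ gluedBags χb χi r C n₁) (h₂ : x ∈ gluedBags χb χi r C n₂) :
    ConnectedIn tree {n | x ∈ gluedBags χb χi r C n} n₁ n₂ := by
  obtain ⟨tx, htx⟩ := hdecb.mem_bag x hx
  have hbase : ∀ n, x ∈ gluedBags χb χi r C n →
      ConnectedIn tree {n | x ∈ gluedBags χb χi r C n} n (.inl tx) := by
    rintro (t | ⟨i, s⟩) hn
    · exact connectedIn_inl_gluedBags_of_mem hg hdecb hCsub hx htx hn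
    have hxC : x ∈ C i := (mem_gluedBags_inr.1 hn).resolve_left fun h =>
      hDβ i ((hdeci i).bags_subset s h) hx
    have hatt' : x ∈ gluedBags χb χi r C (.inl (att i)) :=
      mem_gluedBags_inl.2 (.inr ⟨i, hatt i, hxC⟩)
    have hfiber : ConnectedIn tree {n | x ∈ gluedBags χb χi r C n} (.inr ⟨i, s⟩)
        (.inl (att i)) :=
      ((connectedIn_univ.2 ((hdeci i).isTree.connected.preconnected s (root i))).map_trace
        (hg.inrHom i) fun _ _ => mem_gluedBags_inr.2 (.inr hxC)).trans
        (.of_adj (hg.adj_att_root i).symm (mem_gluedBags_inr.2 (.inr hxC)) hatt')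
    exact hfiber.trans (connectedIn_inl_gluedBags_of_mem hg hdecb hCsub hx htx hatt')
  exact (hbase n₁ h₁).trans (hbase n₂ h₂).symm

end GluedBags

theorem stmt16_general {m : ℕ} {Tb : Type v} {Ti : Fin m → Type v}
    (G : SimpleGraph V) (β : Set V) (D : Fin m → Set V)
    (hcomp : ∀ i, IsCompOf G βᶜ (D i))
    (hcover : ∀ x, x ∉ β → ∃ i, x ∈ D i)
    (hdisj : ∀ i j, i ≠ j → Disjoint (D i) (D j))
    (r : Fin m → V) (C : Fin m → Set V)
    (hCsub : ∀ i, C i ⊆ insert (r i) (G.neighborSet (r i)) ∩ β)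
    (hND : ∀ i, nbhd G (D i) ⊆ C i)
    (treeb : SimpleGraph Tb) (χb : Tb → Set V)
    (hdecb : IsTreeDecompOn G β treeb χb)
    (treei : ∀ i, SimpleGraph (Ti i)) (χi : ∀ i, Ti i → Set V)
    (hdeci : ∀ i, IsTreeDecompOn G (D i) (treei i) (χi i))
    (att : Fin m → Tb) (hatt : ∀ i, r i ∈ χb (att i))
    (root : ∀ i, Ti i)
    (tree : SimpleGraph (Tb ⊕ Σ i, Ti i))
    (h1 : ∀ s t : Tb, tree.Adj (Sum.inl s) (Sum.inl t) ↔ treeb.Adj s t)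
    (h2 : ∀ (i : Fin m) (s t : Ti i),
      tree.Adj (Sum.inr ⟨i, s⟩) (Sum.inr ⟨i, t⟩) ↔ (treei i).Adj s t)
    (h3 : ∀ (i j : Fin m), i ≠ j → ∀ (s : Ti i) (t : Ti j),
      ¬ tree.Adj (Sum.inr ⟨i, s⟩) (Sum.inr ⟨j, t⟩))
    (h4 : ∀ (i : Fin m) (s : Ti i) (t : Tb),
      tree.Adj (Sum.inl t) (Sum.inr ⟨i, s⟩) ↔ (t = att i ∧ s = root i)) :
    IsTreeDecomp G tree
      (Sum.elim (fun t => χb t ∪ ⋃ i, ⋃ (_ : r i ∈ χb t), C i)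
        (fun p => χi p.1 p.2 ∪ C p.1)) := by
  have hg : IsTreeGluing tree treeb treei att root := ⟨h1, h2, h3, h4⟩
  have hCβ : ∀ i, C i ⊆ β := fun i => (hCsub i).trans Set.inter_subset_right
  refine IsTreeDecompOn.mk (χ := gluedBags χb χi r C)
    (hg.isTree hdecb.isTree fun i => (hdeci i).isTree) (fun _ => Set.subset_univ _)
    (fun x _ => exists_mem_gluedBags hdecb hdeci hcover x)
    (fun x _ y _ hxy => exists_adj_mem_gluedBags hdecb hdeci hcover hND hxy)
    fun x n₁ h₁ n₂ h₂ => ?_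
  by_cases hx : x ∈ β
  · exact connectedIn_gluedBags_of_mem hg hdecb hdeci (fun i => (hcomp i).subset) hCsub hatt hx
      h₁ h₂
  · obtain ⟨i, hxi⟩ := hcover x hx
    exact connectedIn_gluedBags_of_not_mem hg hdecb hdeci hdisj hCβ hx hxi h₁ h₂

/-- Extending a tree decomposition of the central bag to one of `G` by hanging
decompositions of the components `D_i` at nodes containing their anchors and
adding `C_i` to the appropriate bags. -/
theorem stmt16 {m : ℕ} {Tb : Type v} {Ti : Fin m → Type v}
    (G : SimpleGraph V) (β : Set V) (D : Fin m → Set V)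
    (hcomp : ∀ i, IsCompOf G βᶜ (D i))
    (hcover : ∀ x, x ∉ β → ∃ i, x ∈ D i)
    (hdisj : ∀ i j, i ≠ j → Disjoint (D i) (D j))
    (r : Fin m → V) (C : Fin m → Set V)
    (hrβ : ∀ i, r i ∈ β)
    (hrC : ∀ i, r i ∈ C i)
    (hCsub : ∀ i, C i ⊆ insert (r i) (G.neighborSet (r i)) ∩ β)
    (hND : ∀ i, nbhd G (D i) ⊆ C i)
    (treeb : SimpleGraph Tb) (χb : Tb → Set V)
    (hdecb : IsTreeDecompOn G β treeb χb)
    (treei : ∀ i, SimpleGraph (Ti i)) (χi : ∀ i, Ti i → Set V)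
    (hdeci : ∀ i, IsTreeDecompOn G (D i) (treei i) (χi i))
    (att : Fin m → Tb) (hatt : ∀ i, r i ∈ χb (att i))
    (root : ∀ i, Ti i)
    (tree : SimpleGraph (Tb ⊕ Σ i, Ti i))
    (h1 : ∀ s t : Tb, tree.Adj (Sum.inl s) (Sum.inl t) ↔ treeb.Adj s t)
    (h2 : ∀ (i : Fin m) (s t : Ti i),
      tree.Adj (Sum.inr ⟨i, s⟩) (Sum.inr ⟨i, t⟩) ↔ (treei i).Adj s t)
    (h3 : ∀ (i j : Fin m), i ≠ j → ∀ (s : Ti i) (t : Ti j),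
      ¬ tree.Adj (Sum.inr ⟨i, s⟩) (Sum.inr ⟨j, t⟩))
    (h4 : ∀ (i : Fin m) (s : Ti i) (t : Tb),
      tree.Adj (Sum.inl t) (Sum.inr ⟨i, s⟩) ↔ (t = att i ∧ s = root i)) :
    IsTreeDecomp G tree
      (Sum.elim (fun t => χb t ∪ ⋃ i, ⋃ (_ : r i ∈ χb t), C i)
        (fun p => χi p.1 p.2 ∪ C p.1)) :=
  stmt16_general G β D hcomp hcover hdisj r C hCsub hND treeb χb hdecb treei χi hdeci att hatt root
    tree h1 h2 h3 h4
end
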